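/- Consider $\dot x = Ax + BPu$ where $A$ is $n\times n$, $B$ is $n\times m$ with $\mathrm{rank}(B)=n$, and $P$ is an $m\times m$ diagonal projection matrix ($P^2 = P$). Suppose $\hat A$ satisfies $B\hat A = A$ and $P\hat A = \hat A$, $K$ is an $m\times n$ gain matrix, $x_g\in\mathbb{R}^n$, and $v = -(\hat A + K)x_g$. Then with $u(t) = v + Kx(t)$ the closed-loop dynamics equal $\dot x = (A+BPK)x + BPv$, and $x_g$ is a rest point of this system. If moreover $A+BPK$ is Hurwitz, every solution converges to $x_g$. -/

import Mathlib

/-!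
The algebra is the identity `B P (Â + K) = A + B P K`, which holds because `P Â = Â` and
`B Â = A`; it makes `x_g` a rest point, and the error `x - x_g` then solves `ẏ = M y` with
`M = A + B P K`. Stability of `ẏ = M y` for Hurwitz `M` is proved after complexification, by
induction on the dimension, for the forced equation `ż = f z + g` with `g → 0`: a left
eigenvector `φ ∘ f = μ φ` splits off the scalar equation `ċ = μ c + φ g`, which decays by
variation of constants, while the component in the invariant hyperplane `ker φ` solves an
equation of the same shape whose forcing term tends to zero.
-/

open Filter Topology Module Matrix

section VariationOfConstants

variable {E : Type*} [NormedAddCommGroup E] [NormedSpace ℂ E]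

theorem eq_exp_smul_add_integral_of_hasDerivAt [CompleteSpace E] {μ : ℂ} {u g : ℝ → E}
    (hg : Continuous g) (hu : ∀ t, HasDerivAt u (μ • u t + g t) t) (T t : ℝ) :
    u t = Complex.exp (μ * (t - T)) • u T + ∫ s in T..t, Complex.exp (μ * (t - s)) • g s := by
  have hderiv : ∀ s ∈ Set.uIcc T t, HasDerivAt (fun r : ℝ => Complex.exp (μ * (t - r)) • u r)
      (Complex.exp (μ * (t - s)) • g s) s := by
    intro s _
    have hexp : HasDerivAt (fun r : ℝ => Complex.exp (μ * (t - r)))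
        (Complex.exp (μ * (t - s)) * (μ * -1)) s :=
      ((((hasDerivAt_id s).ofReal_comp).const_sub (t : ℂ)).const_mul μ).cexp
    exact (hexp.smul (hu s)).congr_deriv (by module)
  rw [intervalIntegral.integral_eq_sub_of_hasDerivAt hderiv
    (Continuous.intervalIntegrable (by fun_prop) _ _)]
  simp

theorem norm_integral_exp_smul_le {μ : ℂ} (hμ : μ.re < 0) {g : ℝ → E} {η T t : ℝ} (hTt : T ≤ t)
    (hg : ∀ s ∈ Set.Icc T t, ‖g s‖ ≤ η) :
    ‖∫ s in T..t, Complex.exp (μ * (t - s)) • g s‖ ≤ η / -μ.re := by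
  have hη : 0 ≤ η := (norm_nonneg _).trans (hg T ⟨le_rfl, hTt⟩)
  have hprim : ∀ s ∈ Set.uIcc T t, HasDerivAt (fun r : ℝ => -Real.exp (μ.re * (t - r)) / μ.re)
      (Real.exp (μ.re * (t - s))) s := by
    intro s _
    exact ((((hasDerivAt_id s).const_sub t).const_mul μ.re).exp.neg.div_const μ.re).congr_deriv
      (by field_simp [hμ.ne]; simp)
  calc ‖∫ s in T..t, Complex.exp (μ * (t - s)) • g s‖
      ≤ ∫ s in T..t, η * Real.exp (μ.re * (t - s)) := by
        refine intervalIntegral.norm_integral_le_of_norm_le hTt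
          (MeasureTheory.ae_of_all _ fun s hs => ?_)
          (Continuous.intervalIntegrable (by fun_prop) _ _)
        rw [norm_smul, Complex.norm_exp, mul_comm]
        simp only [Complex.mul_re, Complex.sub_re, Complex.ofReal_re, Complex.sub_im,
          Complex.ofReal_im, sub_self, mul_zero, sub_zero]
        exact mul_le_mul_of_nonneg_right (hg s (Set.Ioc_subset_Icc_self hs)) (Real.exp_nonneg _)
    _ = η * ((Real.exp (μ.re * (t - T)) - 1) / μ.re) := by
        rw [intervalIntegral.integral_const_mul,
          intervalIntegral.integral_eq_sub_of_hasDerivAt hprim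
            (Continuous.intervalIntegrable (by fun_prop) _ _)]
        simp only [sub_self, mul_zero, Real.exp_zero]
        ring
    _ ≤ η / -μ.re := by
        rw [div_neg, ← neg_div, ← mul_div_assoc]
        apply div_le_div_of_nonpos_of_le hμ.le
        nlinarith [Real.exp_nonneg (μ.re * (t - T))]

theorem tendsto_zero_of_hasDerivAt_eq_smul_add [CompleteSpace E] {μ : ℂ} (hμ : μ.re < 0)
    {u g : ℝ → E} (hg : Continuous g) (hg0 : Tendsto g atTop (𝓝 0))
    (hu : ∀ t, HasDerivAt u (μ • u t + g t) t) : Tendsto u atTop (𝓝 0) := by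
  rw [Metric.tendsto_nhds]
  intro ε hε
  have ha : 0 < -μ.re := neg_pos.mpr hμ
  obtain ⟨T, hT⟩ := eventually_atTop.mp <|
    (tendsto_zero_iff_norm_tendsto_zero.mp hg0).eventually (ge_mem_nhds (by positivity :
      (0 : ℝ) < ε * -μ.re / 2))
  have hdecay : Tendsto (fun t : ℝ => Real.exp (μ.re * (t - T)) * ‖u T‖) atTop (𝓝 0) := by
    have hlin := (tendsto_atTop_add_const_right _ (-T) tendsto_id).const_mul_atTop_of_neg hμ
    simpa [← sub_eq_add_neg] using (Real.tendsto_exp_atBot.comp hlin).mul_const ‖u T‖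
  filter_upwards [eventually_ge_atTop T, hdecay.eventually (gt_mem_nhds (half_pos hε))]
    with t hTt ht
  rw [dist_zero_right, eq_exp_smul_add_integral_of_hasDerivAt hg hu T t]
  calc ‖Complex.exp (μ * (t - T)) • u T + ∫ s in T..t, Complex.exp (μ * (t - s)) • g s‖
      ≤ Real.exp (μ.re * (t - T)) * ‖u T‖ + ε * -μ.re / 2 / -μ.re := by
        refine (norm_add_le _ _).trans (add_le_add (le_of_eq ?_)
          (norm_integral_exp_smul_le hμ hTt fun s hs => hT s hs.1))
        rw [norm_smul, Complex.norm_exp]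
        simp
    _ < ε := by
        have : ε * -μ.re / 2 / -μ.re = ε / 2 := by
          rw [div_right_comm, mul_div_cancel_right₀ _ ha.ne']
        linarith

end VariationOfConstants

section LinearAlgebra

variable {K V : Type*} [Field K] [AddCommGroup V] [Module K V]

theorem LinearMap.spectrum_restrict_subset [FiniteDimensional K V] (f : End K V)
    {p : Submodule K V} (hfp : ∀ x ∈ p, f x ∈ p) : spectrum K (f.restrict hfp) ⊆ spectrum K f := by
  intro μ hμ
  obtain ⟨x, hx⟩ := (End.hasEigenvalue_iff_mem_spectrum.mpr hμ).exists_hasEigenvector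
  refine (End.hasEigenvalue_of_hasEigenvector (x := (x : V)) ⟨?_, ?_⟩).mem_spectrum
  · exact End.mem_eigenspace_iff.mpr (congrArg Subtype.val hx.apply_eq_smul)
  · exact_mod_cast hx.2

theorem Module.End.exists_dual_comp_eq_smul [FiniteDimensional K V] {f : End K V} {μ : K}
    (hμ : μ ∈ spectrum K f) :
    ∃ φ : Dual K V, φ ≠ 0 ∧ ∀ x, φ (f x) = μ * φ x := by
  have hrange : LinearMap.range (algebraMap K (End K V) μ - f) < ⊤ := by
    rw [lt_top_iff_ne_top, Ne, ← LinearMap.isUnit_iff_range_eq_top]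
    exact hμ
  obtain ⟨φ, hφ, hle⟩ := Submodule.exists_le_ker_of_lt_top _ hrange
  refine ⟨φ, hφ, fun x => ?_⟩
  have : φ (μ • x - f x) = 0 := hle ⟨x, rfl⟩
  rw [map_sub, map_smul, smul_eq_mul, sub_eq_zero] at this
  exact this.symm

def Module.Dual.projKer (φ : Dual K V) {e : V} (he : φ e = 1) : V →ₗ[K] LinearMap.ker φ :=
  (LinearMap.id - φ.smulRight e).codRestrict _ fun x => by simp [he]

namespace Module.Dual.projKer

variable {φ : Dual K V} {e : V} (he : φ e = 1)

@[simp]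
theorem coe_apply (x : V) : (projKer φ he x : V) = x - φ x • e := rfl

theorem apply_comp {f : End K V} {μ : K} (hφf : ∀ x, φ (f x) = μ * φ x)
    (hf : ∀ x ∈ LinearMap.ker φ, f x ∈ LinearMap.ker φ) (x : V) :
    projKer φ he (f x) = f.restrict hf (projKer φ he x) + φ x • projKer φ he (f e) := by
  ext
  simp only [coe_apply, Submodule.coe_add, Submodule.coe_smul, LinearMap.coe_restrict_apply,
    map_sub, map_smul, hφf, he]
  module

end Module.Dual.projKer

end LinearAlgebra

section LinearStability

variable {E : Type*} [NormedAddCommGroup E] [NormedSpace ℂ E] [FiniteDimensional ℂ E]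

theorem HasDerivAt.linearMap_comp {F : Type*} [NormedAddCommGroup F] [NormedSpace ℂ F]
    (L : E →ₗ[ℂ] F) {z : ℝ → E} {z' : E} {t : ℝ} (hz : HasDerivAt z z' t) :
    HasDerivAt (fun s => L (z s)) (L z') t :=
  ((LinearMap.toContinuousLinearMap L).restrictScalars ℝ).hasFDerivAt.comp_hasDerivAt t hz

theorem tendsto_zero_of_hasDerivAt_apply_add (f : End ℂ E)
    (hf : ∀ μ ∈ spectrum ℂ f, μ.re < 0) {z g : ℝ → E} (hg : Continuous g)
    (hg0 : Tendsto g atTop (𝓝 0)) (hz : ∀ t, HasDerivAt z (f (z t) + g t) t) :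
    Tendsto z atTop (𝓝 0) := by
  obtain ⟨N, hN⟩ : ∃ N, finrank ℂ E = N := ⟨_, rfl⟩
  induction N generalizing E with
  | zero =>
    have : Subsingleton E := finrank_zero_iff.mp hN
    simp [Subsingleton.elim _ (0 : E)]
  | succ N ih =>
    have : Nontrivial E := Module.finrank_pos_iff (R := ℂ) |>.mp (by omega)
    obtain ⟨μ, hμ⟩ := End.exists_eigenvalue f
    have hμre := hf μ hμ.mem_spectrum
    obtain ⟨φ, hφ, hφf⟩ := End.exists_dual_comp_eq_smul hμ.mem_spectrum
    obtain ⟨e, he⟩ := LinearMap.surjective hφ 1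
    have hfW : ∀ x ∈ LinearMap.ker φ, f x ∈ LinearMap.ker φ := fun x hx => by simp_all
    have hW : finrank ℂ (LinearMap.ker φ) = N := by
      have := Module.Dual.finrank_ker_add_one_of_ne_zero hφ
      omega
    set π := Dual.projKer φ he
    have hc : ∀ t, HasDerivAt (fun s => φ (z s)) (μ • φ (z t) + φ (g t)) t := fun t => by
      simpa [hφf] using (hz t).linearMap_comp φ
    have hc0 := tendsto_zero_of_hasDerivAt_eq_smul_add hμre
      (φ.continuous_of_finiteDimensional.comp hg) (by simpa using
        (φ.continuous_of_finiteDimensional.tendsto 0).comp hg0) hc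
    have hw : ∀ t, HasDerivAt (fun s => π (z s))
        (f.restrict hfW (π (z t)) + (φ (z t) • π (f e) + π (g t))) t := fun t => by
      have := (hz t).linearMap_comp π
      rwa [map_add, Dual.projKer.apply_comp he hφf hfW, add_assoc] at this
    have hπ := π.continuous_of_finiteDimensional
    have hcc : Continuous fun s => φ (z s) :=
      continuous_iff_continuousAt.2 fun t => (hc t).continuousAt
    have hw0 := ih (f.restrict hfW) (g := fun t => φ (z t) • π (f e) + π (g t))
      (fun ν hν => hf ν (LinearMap.spectrum_restrict_subset f hfW hν))
      ((hcc.smul continuous_const).add (hπ.comp hg))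
      (by simpa using (hc0.smul_const (π (f e))).add ((hπ.tendsto 0).comp hg0)) hw hW
    simpa [π] using ((continuous_subtype_val.tendsto 0).comp hw0).add (hc0.smul_const e)

end LinearStability

theorem Matrix.tendsto_zero_of_hasDerivAt_mulVec {ι : Type*} [Fintype ι] [DecidableEq ι]
    {M : Matrix ι ι ℝ} (hM : ∀ μ ∈ spectrum ℂ (M.map Complex.ofReal), μ.re < 0)
    {y : ℝ → ι → ℝ} (hy : ∀ t, HasDerivAt y (M *ᵥ y t) t) : Tendsto y atTop (𝓝 0) := by
  have hz : ∀ t, HasDerivAt (fun s i => (y s i : ℂ))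
      (toLin' (M.map Complex.ofReal) (fun i => (y t i : ℂ)) + 0) t := by
    intro t
    rw [add_zero, hasDerivAt_pi]
    intro i
    exact ((hasDerivAt_pi.mp (hy t)) i).ofReal_comp.congr_deriv
      (Complex.ofRealHom.map_mulVec M (y t) i)
  have hz0 := tendsto_zero_of_hasDerivAt_apply_add _ (by rwa [Matrix.spectrum_toLin'])
    continuous_const tendsto_const_nhds hz
  refine tendsto_pi_nhds.2 fun i => ?_
  simpa [Function.comp_def] using
    (Complex.continuous_re.tendsto 0).comp (tendsto_pi_nhds.1 hz0 i)

theorem stmt_15_general (n m : ℕ) (A : Matrix (Fin n) (Fin n) ℝ) (B : Matrix (Fin n) (Fin m) ℝ)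
    (P : Matrix (Fin m) (Fin m) ℝ) (Ahat K : Matrix (Fin m) (Fin n) ℝ)
    (xg : Fin n → ℝ) (v : Fin m → ℝ)
    (hAhat : B * Ahat = A) (hPA : P * Ahat = Ahat)
    (hv : v = -((Ahat + K) *ᵥ xg)) :
    (∀ w : Fin n → ℝ, A *ᵥ w + (B * P) *ᵥ (v + K *ᵥ w) =
        (A + B * P * K) *ᵥ w + (B * P) *ᵥ v) ∧
      ((A + B * P * K) *ᵥ xg + (B * P) *ᵥ v = 0) ∧
      ((∀ μ ∈ spectrum ℂ ((A + B * P * K).map (Complex.ofReal)), μ.re < 0) →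
        ∀ x : ℝ → (Fin n → ℝ),
          (∀ t, HasDerivAt x ((A + B * P * K) *ᵥ x t + (B * P) *ᵥ v) t) →
            Tendsto x atTop (nhds xg)) := by
  have hclosed : B * P * (Ahat + K) = A + B * P * K := by
    rw [Matrix.mul_add, Matrix.mul_assoc, hPA, hAhat]
  have hrest : (A + B * P * K) *ᵥ xg + (B * P) *ᵥ v = 0 := by
    rw [hv, mulVec_neg, mulVec_mulVec, hclosed, add_neg_cancel]
  refine ⟨fun w => by rw [mulVec_add, add_mulVec, mulVec_mulVec]; abel, hrest, fun hM x hx => ?_⟩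
  have hy : ∀ t, HasDerivAt (fun s => x s - xg) ((A + B * P * K) *ᵥ (x t - xg)) t := fun t =>
    ((hx t).sub_const xg).congr_deriv
      (by rw [mulVec_sub, eq_neg_of_add_eq_zero_right hrest, sub_eq_add_neg])
  simpa using (tendsto_zero_of_hasDerivAt_mulVec hM hy).add_const xg

theorem stmt_15 (n m : ℕ) (A : Matrix (Fin n) (Fin n) ℝ) (B : Matrix (Fin n) (Fin m) ℝ)
    (P : Matrix (Fin m) (Fin m) ℝ) (Ahat K : Matrix (Fin m) (Fin n) ℝ)
    (xg : Fin n → ℝ) (v : Fin m → ℝ)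
    (hrank : B.rank = n) (hPdiag : P.IsDiag) (hPproj : P * P = P)
    (hAhat : B * Ahat = A) (hPA : P * Ahat = Ahat)
    (hv : v = -((Ahat + K) *ᵥ xg)) :
    (∀ w : Fin n → ℝ, A *ᵥ w + (B * P) *ᵥ (v + K *ᵥ w) =
        (A + B * P * K) *ᵥ w + (B * P) *ᵥ v) ∧
      ((A + B * P * K) *ᵥ xg + (B * P) *ᵥ v = 0) ∧
      ((∀ μ ∈ spectrum ℂ ((A + B * P * K).map (Complex.ofReal)), μ.re < 0) →
        ∀ x : ℝ → (Fin n → ℝ),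
          (∀ t, HasDerivAt x ((A + B * P * K) *ᵥ x t + (B * P) *ᵥ v) t) →
            Tendsto x atTop (nhds xg)) :=
  stmt_15_general n m A B P Ahat K xg v hAhat hPA hv
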